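/- arXiv:1705.07210 — 5 statements merged into one kernel-verified Lean document; each statement's English description precedes it below -/
import Mathlib

section
/- Existence and uniqueness of the log-partition value: let 0 < t < 2 and let a ∈ ℝ^C be a vector of activations (C ≥ 1). Then there exists a unique real number g such that Σ_{c=1}^C exp_t(a_c - g) = 1 (when 1 < t < 2, this g additionally satisfies a_c - g < 1/(t-1) for all c, so every summand is given by the positive branch). -/
/-- The tempered exponential `exp_t`: for `t ≠ 1` it is
`(max 0 (1 + (1-t)u))^(1/(1-t))`; for `t = 1` it is the standard exponential. -/
noncomputable def texp (t u : ℝ) : ℝ :=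
  if t = 1 then Real.exp u else (max 0 (1 + (1 - t) * u)) ^ (1 / (1 - t))

lemma texp_of_ne {t : ℝ} (h : t ≠ 1) (u : ℝ) :
    texp t u = (max 0 (1 + (1 - t) * u)) ^ (1 / (1 - t)) := if_neg h

lemma texp_nonneg (t u : ℝ) : 0 ≤ texp t u := by
  unfold texp
  split
  · exact (Real.exp_pos _).le
  · exact Real.rpow_nonneg (le_max_left _ _) _

lemma texp_zero (t : ℝ) : texp t 0 = 1 := by
  unfold texp
  split
  · simp
  · norm_num

-- for t < 1
lemma texp_mono_lt {t : ℝ} (ht : t < 1) {u v : ℝ} (huv : u ≤ v) :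
    texp t u ≤ texp t v := by
  have hs : 0 < 1 - t := by linarith
  rw [texp_of_ne ht.ne, texp_of_ne ht.ne]
  apply Real.rpow_le_rpow (le_max_left _ _)
    (max_le_max le_rfl (by nlinarith)) (by positivity)

lemma texp_strict_lt {t : ℝ} (ht : t < 1) {u v : ℝ} (huv : u < v)
    (hu : 0 < 1 + (1 - t) * u) : texp t u < texp t v := by
  have hs : 0 < 1 - t := by linarith
  rw [texp_of_ne ht.ne, texp_of_ne ht.ne]
  have hv : 1 + (1 - t) * u < 1 + (1 - t) * v := by nlinarith
  apply Real.rpow_lt_rpow (le_max_left _ _) ?_ (by positivity)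
  rw [max_eq_right hu.le, max_eq_right (hu.trans hv).le]
  exact hv

lemma texp_eq_zero_lt {t : ℝ} (ht : t < 1) {u : ℝ} (hu : 1 + (1 - t) * u ≤ 0) :
    texp t u = 0 := by
  have hs : 0 < 1 - t := by linarith
  rw [texp_of_ne ht.ne, max_eq_left hu, Real.zero_rpow (by positivity)]

lemma texp_pos_base {t : ℝ} (ht : t ≠ 1) {u : ℝ} (hpos : 0 < texp t u) :
    0 < 1 + (1 - t) * u := by
  by_contra h
  have hs : (1 : ℝ) - t ≠ 0 := sub_ne_zero.mpr (Ne.symm ht)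
  rw [texp_of_ne ht, max_eq_left (not_lt.mp h),
    Real.zero_rpow (one_div_ne_zero hs)] at hpos
  exact lt_irrefl 0 hpos

-- for t > 1 : strict increase on positive branch
lemma texp_strict_gt {t : ℝ} (ht : 1 < t) {u v : ℝ} (huv : u < v)
    (hv : 0 < 1 + (1 - t) * v) : texp t u < texp t v := by
  rw [texp_of_ne ht.ne', texp_of_ne ht.ne']
  have hu : 1 + (1 - t) * v < 1 + (1 - t) * u := by nlinarith
  rw [max_eq_right hv.le, max_eq_right (hv.trans hu).le]
  exact Real.rpow_lt_rpow_of_neg hv hu (by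
    rw [one_div]
    exact inv_neg''.mpr (by linarith))

/-- Existence and uniqueness of the log-partition value: for `0 < t < 2` and
activations `a ∈ ℝ^C` with `C ≥ 1`, there is a unique `g ∈ ℝ` with
`∑ c, exp_t (a c - g) = 1`, which, when `1 < t < 2`, additionally satisfies
`a c - g < 1/(t-1)` for every `c` (so every summand lies on the positive
branch). -/
theorem logPartition_existsUnique (t : ℝ) (ht0 : 0 < t) (ht2 : t < 2)
    (C : ℕ) (hC : 1 ≤ C) (a : Fin C → ℝ) :
    ∃! g : ℝ, (∑ c : Fin C, texp t (a c - g) = 1) ∧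
      (1 < t → ∀ c : Fin C, a c - g < 1 / (t - 1)) := by
  have hne : (Finset.univ : Finset (Fin C)).Nonempty := ⟨⟨0, hC⟩, Finset.mem_univ _⟩
  rcases lt_trichotomy t 1 with ht | ht | ht
  · -- case t < 1
    set f : ℝ → ℝ := fun g => ∑ c : Fin C, texp t (a c - g) with hf
    have hs : 0 < 1 - t := by linarith
    have hcont : Continuous f := by
      apply continuous_finset_sum
      intro c _
      have heq : (fun g => texp t (a c - g)) =
          fun g => (max 0 (1 + (1 - t) * (a c - g))) ^ (1 / (1 - t)) := by
        funext g; exact texp_of_ne ht.ne _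
      rw [heq]
      exact (continuous_const.max (by continuity)).rpow_const
        (fun x => Or.inr (by positivity))
    have key : ∀ x z : ℝ, x < z → f z = 1 → 1 < f x := by
      intro x z hxz hz
      have hex : ∃ c : Fin C, 0 < texp t (a c - z) := by
        by_contra h
        push_neg at h
        have : f z ≤ 0 := Finset.sum_nonpos (fun c _ => h c)
        rw [hz] at this; linarith
      obtain ⟨c₀, hc₀⟩ := hex
      have hlt : f z < f x := by
        apply Finset.sum_lt_sum
        · intro c _; exact texp_mono_lt ht (by linarith)
        · exact ⟨c₀, Finset.mem_univ _,
            texp_strict_lt ht (by linarith) (texp_pos_base ht.ne hc₀)⟩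
      rw [hz] at hlt; exact hlt
    obtain ⟨c₀, -, hM⟩ := Finset.exists_mem_eq_sup' hne a
    set M := Finset.univ.sup' hne a with hMdef
    have hg₁ : 1 ≤ f (a c₀) := by
      have := Finset.single_le_sum (f := fun c => texp t (a c - a c₀))
        (fun c _ => texp_nonneg _ _) (Finset.mem_univ c₀)
      simpa [texp_zero] using this
    set g₂ : ℝ := M + 1 / (1 - t) with hg₂def
    have hg₂ : f g₂ = 0 := by
      apply Finset.sum_eq_zero
      intro c _
      apply texp_eq_zero_lt ht
      have hcM : a c ≤ M := Finset.le_sup' a (Finset.mem_univ c)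
      have h1 : a c - g₂ ≤ -(1 / (1 - t)) := by rw [hg₂def]; linarith
      have h2 : (1 - t) * (a c - g₂) ≤ (1 - t) * (-(1 / (1 - t))) :=
        mul_le_mul_of_nonneg_left h1 hs.le
      rw [mul_neg, mul_one_div, div_self hs.ne'] at h2
      linarith
    have hle : a c₀ ≤ g₂ := by
      have h1 : a c₀ ≤ M := Finset.le_sup' a (Finset.mem_univ c₀)
      have h2 : 0 < 1 / (1 - t) := by positivity
      rw [hg₂def]; linarith
    have hivt := intermediate_value_Icc' hle hcont.continuousOn
    have hmem : (1 : ℝ) ∈ Set.Icc (f g₂) (f (a c₀)) := ⟨by rw [hg₂]; norm_num, hg₁⟩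
    obtain ⟨g, -, hgeq⟩ := hivt hmem
    refine ⟨g, ⟨hgeq, fun h => absurd h (by linarith)⟩, ?_⟩
    rintro y ⟨hy, -⟩
    by_contra hne'
    rcases lt_or_gt_of_ne hne' with h | h
    · have hy' : f y = 1 := hy
      have := key y g h hgeq; linarith
    · have hy' : f y = 1 := hy
      have := key g y h hy'; rw [hgeq] at this; linarith
  · -- case t = 1
    subst ht
    have hS : 0 < ∑ c : Fin C, Real.exp (a c) :=
      Finset.sum_pos (fun c _ => Real.exp_pos _) hne
    have htexp : ∀ u : ℝ, texp 1 u = Real.exp u := fun u => if_pos rfl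
    refine ⟨Real.log (∑ c : Fin C, Real.exp (a c)),
      ⟨?_, fun h => absurd h (lt_irrefl 1)⟩, ?_⟩
    · simp only [htexp, Real.exp_sub]
      rw [← Finset.sum_div, Real.exp_log hS, div_self hS.ne']
    · rintro y ⟨hy, -⟩
      simp only [htexp, Real.exp_sub, ← Finset.sum_div] at hy
      have hey : Real.exp y = ∑ c : Fin C, Real.exp (a c) := by
        rw [div_eq_one_iff_eq (Real.exp_ne_zero y)] at hy
        exact hy.symm
      rw [← hey, Real.log_exp]
  · -- case t > 1
    set f : ℝ → ℝ := fun g => ∑ c : Fin C, texp t (a c - g) with hf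
    have hs : 1 - t < 0 := by linarith
    have ht1 : 0 < t - 1 := by linarith
    set M := Finset.univ.sup' hne a with hMdef
    have hbase : ∀ g, M ≤ g → ∀ c : Fin C, 1 ≤ 1 + (1 - t) * (a c - g) := by
      intro g hg c
      have h1 : a c ≤ M := Finset.le_sup' a (Finset.mem_univ c)
      nlinarith [mul_nonneg (by linarith : (0:ℝ) ≤ t - 1)
        (by linarith : (0:ℝ) ≤ g - a c)]
    have hcont : ContinuousOn f (Set.Ici M) := by
      apply continuousOn_finset_sum
      intro c _
      have heq : (fun g => texp t (a c - g)) =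
          fun g => (max 0 (1 + (1 - t) * (a c - g))) ^ (1 / (1 - t)) := by
        funext g; exact texp_of_ne ht.ne' _
      rw [heq]
      apply ContinuousOn.rpow_const
      · exact (continuous_const.max (by continuity)).continuousOn
      · intro x hx
        left
        have := hbase x hx c
        have : (1:ℝ) ≤ max 0 (1 + (1 - t) * (a c - x)) := le_trans this (le_max_right _ _)
        linarith
    -- key: strict decrease on the branch region
    have hbranch_base : ∀ x : ℝ, ∀ c : Fin C, a c - x < 1 / (t - 1) →
        0 < 1 + (1 - t) * (a c - x) := by
      intro x c hb
      have h1 : (t - 1) * (a c - x) < (t - 1) * (1 / (t - 1)) :=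
        mul_lt_mul_of_pos_left hb ht1
      rw [mul_one_div, div_self ht1.ne'] at h1
      nlinarith
    have key : ∀ x z : ℝ, x < z → (∀ c : Fin C, a c - x < 1 / (t - 1)) →
        f z < f x := by
      intro x z hxz hbx
      apply Finset.sum_lt_sum_of_nonempty hne
      intro c _
      exact texp_strict_gt ht (by linarith) (hbranch_base x c (hbx c))
    -- existence
    obtain ⟨c₀, -, hMc⟩ := Finset.exists_mem_eq_sup' hne a
    have hMc' : M = a c₀ := hMc
    have hg₁ : 1 ≤ f M := by
      have hsle := Finset.single_le_sum (f := fun c => texp t (a c - M))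
        (fun c _ => texp_nonneg _ _) (Finset.mem_univ c₀)
      have h0 : texp t (a c₀ - M) = 1 := by rw [hMc', sub_self, texp_zero]
      simp only [h0] at hsle
      exact hsle
    set g₂ : ℝ := M + (C - 1) / (t - 1) with hg₂def
    have hM2 : M ≤ g₂ := by
      have h1 : (0:ℝ) ≤ ((C:ℝ) - 1) / (t - 1) := by
        apply div_nonneg _ ht1.le
        have : (1:ℝ) ≤ (C:ℝ) := by exact_mod_cast hC
        linarith
      rw [hg₂def]; linarith
    have hC1 : (1:ℝ) ≤ (C:ℝ) := by exact_mod_cast hC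
    have hg₂le : f g₂ ≤ 1 := by
      have hterm : ∀ c : Fin C, texp t (a c - g₂) ≤ (C:ℝ)⁻¹ := by
        intro c
        have hcM : a c ≤ M := Finset.le_sup' a (Finset.mem_univ c)
        have hb : (C:ℝ) ≤ 1 + (1 - t) * (a c - g₂) := by
          have h1 : a c - g₂ ≤ -(((C:ℝ) - 1) / (t - 1)) := by rw [hg₂def]; linarith
          have h2 : (1 - t) * (a c - g₂) ≥ (1 - t) * (-(((C:ℝ) - 1) / (t - 1))) :=
            mul_le_mul_of_nonpos_left h1 hs.le
          have h3 : (1 - t) * (-(((C:ℝ) - 1) / (t - 1))) = (C:ℝ) - 1 := by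
            field_simp
            ring
          rw [h3] at h2
          linarith
        have hb1 : (1:ℝ) ≤ 1 + (1 - t) * (a c - g₂) := le_trans hC1 hb
        rw [texp_of_ne ht.ne', max_eq_right (by linarith)]
        calc (1 + (1 - t) * (a c - g₂)) ^ (1 / (1 - t))
            ≤ (1 + (1 - t) * (a c - g₂)) ^ (-1 : ℝ) := by
              apply Real.rpow_le_rpow_of_exponent_le hb1
              rw [div_le_iff_of_neg hs]
              linarith
          _ = (1 + (1 - t) * (a c - g₂))⁻¹ := Real.rpow_neg_one _
          _ ≤ (C:ℝ)⁻¹ := by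
              apply inv_anti₀ (by linarith) hb
      calc f g₂ ≤ ∑ _c : Fin C, (C:ℝ)⁻¹ :=
            Finset.sum_le_sum (fun c _ => hterm c)
        _ = 1 := by
            rw [Finset.sum_const, Finset.card_univ, Fintype.card_fin, nsmul_eq_mul]
            field_simp
    have hivt := intermediate_value_Icc' hM2 (hcont.mono (Set.Icc_subset_Ici_self))
    have hmem : (1 : ℝ) ∈ Set.Icc (f g₂) (f M) := ⟨hg₂le, hg₁⟩
    obtain ⟨g, hgmem, hgeq⟩ := hivt hmem
    have hbr : ∀ c : Fin C, a c - g < 1 / (t - 1) := by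
      intro c
      have h1 : a c ≤ M := Finset.le_sup' a (Finset.mem_univ c)
      have h2 : M ≤ g := hgmem.1
      have h3 : 0 < 1 / (t - 1) := by positivity
      linarith
    refine ⟨g, ⟨hgeq, fun _ => hbr⟩, ?_⟩
    rintro y ⟨hy, hby⟩
    by_contra hne'
    rcases lt_or_gt_of_ne hne' with h | h
    · have hy' : f y = 1 := hy
      have := key y g h (hby ht); rw [hgeq, hy'] at this; exact lt_irrefl 1 this
    · have hy' : f y = 1 := hy
      have := key g y h hbr; rw [hgeq, hy'] at this; exact lt_irrefl 1 this
end

section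
/- Boundedness of the surrogate loss for t₁ < 1: for every temperature t₁ with 0 < t₁ < 1 and every probability value p with 0 < p ≤ 1, the loss -log_{t₁} p satisfies 0 ≤ -log_{t₁} p ≤ 1/(1-t₁); hence the surrogate loss of each individual observation is capped by the constant 1/(1-t₁). -/
/-- The tempered logarithm `log_t`: for `t ≠ 1` it is `(x^(1-t) - 1)/(1-t)`;
for `t = 1` it is the natural logarithm. -/
noncomputable def tlog (t x : ℝ) : ℝ :=
  if t = 1 then Real.log x else (x ^ (1 - t) - 1) / (1 - t)

/-- Boundedness of the surrogate loss for `t₁ < 1`: for `0 < t₁ < 1` and a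
probability value `0 < p ≤ 1`, the loss `-log_{t₁} p` lies in
`[0, 1/(1-t₁)]`. -/
theorem loss_bounded (t₁ : ℝ) (ht0 : 0 < t₁) (ht1 : t₁ < 1)
    (p : ℝ) (hp0 : 0 < p) (hp1 : p ≤ 1) :
    0 ≤ -tlog t₁ p ∧ -tlog t₁ p ≤ 1 / (1 - t₁) := by
  have hne : t₁ ≠ 1 := ne_of_lt ht1
  have h1t : 0 < 1 - t₁ := by linarith
  have hple : p ^ (1 - t₁) ≤ 1 := Real.rpow_le_one hp0.le hp1 h1t.le
  have hppos : 0 < p ^ (1 - t₁) := Real.rpow_pos_of_pos hp0 _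
  simp only [tlog, if_neg hne]
  constructor
  · rw [neg_nonneg]
    apply div_nonpos_of_nonpos_of_nonneg <;> linarith
  · rw [← neg_div, neg_sub]
    gcongr
    linarith
end

section
/- Monotonicity and quasi-convexity of the binary two-temperature loss (Theorem 1, part 2 consequence): let 0 < t₁ < 2 and 1 < t₂ < 2, and for each a ∈ ℝ let G(a) denote the unique real with exp_{t₂}(a/2 - G(a)) + exp_{t₂}(-a/2 - G(a)) = 1. Then the predictive probability a ↦ exp_{t₂}(a/2 - G(a)) is strictly increasing on ℝ, and hence the surrogate loss ξ(a) = -log_{t₁} exp_{t₂}(a/2 - G(a)) is strictly decreasing on ℝ, and in particular quasi-convex. -/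
lemma texp_strictMonoOn {t : ℝ} (ht : 1 < t) {u v : ℝ}
    (hu : u < 1 / (t - 1)) (hv : v < 1 / (t - 1)) (huv : u < v) :
    texp t u < texp t v := by
  have ht1 : (1 : ℝ) - t < 0 := by linarith
  have hne : t ≠ 1 := by linarith
  have hbu : 0 < 1 + (1 - t) * u := by
    rw [div_eq_inv_mul, lt_inv_mul_iff₀ (by linarith : (0:ℝ) < t - 1)] at hu
    nlinarith
  have hbv : 0 < 1 + (1 - t) * v := by
    rw [div_eq_inv_mul, lt_inv_mul_iff₀ (by linarith : (0:ℝ) < t - 1)] at hv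
    nlinarith
  have hbase : 1 + (1 - t) * v < 1 + (1 - t) * u := by nlinarith
  have hz : 1 / (1 - t) < 0 := by
    exact div_neg_of_pos_of_neg one_pos ht1
  simp only [texp, if_neg hne, max_eq_right hbu.le, max_eq_right hbv.le]
  exact Real.rpow_lt_rpow_of_neg hbv hbase hz

lemma texp_pos {t : ℝ} (ht : 1 < t) {u : ℝ} (hu : u < 1 / (t - 1)) :
    0 < texp t u := by
  have hne : t ≠ 1 := by linarith
  have hbu : 0 < 1 + (1 - t) * u := by
    rw [div_eq_inv_mul, lt_inv_mul_iff₀ (by linarith : (0:ℝ) < t - 1)] at hu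
    nlinarith
  simp only [texp, if_neg hne, max_eq_right hbu.le]
  exact Real.rpow_pos_of_pos hbu _

lemma tlog_strictMonoOn {t : ℝ} {x y : ℝ} (hx : 0 < x) (hxy : x < y) :
    tlog t x < tlog t y := by
  unfold tlog
  by_cases hne : t = 1
  · simp [hne, Real.log_lt_log hx hxy]
  · simp only [if_neg hne]
    rcases lt_or_gt_of_ne (sub_ne_zero.mpr (Ne.symm hne)) with h | h
    · have := Real.rpow_lt_rpow_of_neg hx hxy h
      rw [div_lt_div_right_of_neg h]
      linarith
    · have := Real.rpow_lt_rpow hx.le hxy h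
      rw [div_lt_div_iff_of_pos_right h]
      linarith

/-- Monotonicity and quasi-convexity of the binary two-temperature loss: with
`0 < t₁ < 2`, `1 < t₂ < 2`, and `G` the (unique, positive-branch)
log-partition function of the binary margin, the predictive probability
`a ↦ exp_{t₂}(a/2 - G a)` is strictly increasing, so the surrogate loss
`ξ(a) = -log_{t₁} exp_{t₂}(a/2 - G a)` is strictly decreasing, and in
particular quasi-convex. -/
theorem binary_loss_strictAnti_quasiconvex (t₁ t₂ : ℝ)
    (ht₁0 : 0 < t₁) (ht₁2 : t₁ < 2) (ht₂1 : 1 < t₂) (ht₂2 : t₂ < 2)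
    (G : ℝ → ℝ)
    (hG : ∀ a : ℝ, texp t₂ (a / 2 - G a) + texp t₂ (-a / 2 - G a) = 1)
    (hGbranch : ∀ a : ℝ,
      a / 2 - G a < 1 / (t₂ - 1) ∧ -a / 2 - G a < 1 / (t₂ - 1)) :
    StrictMono (fun a : ℝ => texp t₂ (a / 2 - G a)) ∧
    StrictAnti (fun a : ℝ => -tlog t₁ (texp t₂ (a / 2 - G a))) ∧
    QuasiconvexOn ℝ Set.univ (fun a : ℝ => -tlog t₁ (texp t₂ (a / 2 - G a))) := by
  have hmono : StrictMono (fun a : ℝ => texp t₂ (a / 2 - G a)) := by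
    intro a b hab
    by_contra hle
    push_neg at hle
    -- from texp(b/2 - G b) ≤ texp(a/2 - G a), get b/2 - G b ≤ a/2 - G a
    have h1 : b / 2 - G b ≤ a / 2 - G a := by
      by_contra h
      push_neg at h
      exact absurd (texp_strictMonoOn ht₂1 (hGbranch a).1 (hGbranch b).1 h)
        (not_lt.mpr hle)
    -- then texp(-b/2 - G b) ≥ texp(-a/2 - G a), so -b/2 - G b ≥ -a/2 - G a
    have h2 : -a / 2 - G a ≤ -b / 2 - G b := by
      by_contra h
      push_neg at h
      have := texp_strictMonoOn ht₂1 (hGbranch b).2 (hGbranch a).2 h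
      have hGa := hG a; have hGb := hG b
      linarith
    linarith
  have hanti : StrictAnti (fun a : ℝ => -tlog t₁ (texp t₂ (a / 2 - G a))) := by
    intro a b hab
    have hp := texp_pos ht₂1 (hGbranch a).1
    have := tlog_strictMonoOn (t := t₁) hp (hmono hab)
    simpa using this
  exact ⟨hmono, hanti, hanti.antitone.quasiconvexOn⟩
end

section
/- Unique minimizer of the binary tempered cross-entropy: let 0 < t₁ < 2 and η ∈ (0,1). The function F(q) = -η · log_{t₁}(q) - (1-η) · log_{t₁}(1-q), defined for q ∈ (0,1), attains its minimum at the unique point q* = η^{1/t₁} / (η^{1/t₁} + (1-η)^{1/t₁}), i.e. F(q*) ≤ F(q) for all q ∈ (0,1) with equality only at q = q*. -/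
open Set

lemma hasDerivAt_tlog (t : ℝ) {x : ℝ} (hx : 0 < x) : HasDerivAt (tlog t) (x ^ (-t)) x := by
  rcases eq_or_ne t 1 with rfl | ht
  · have htlog : tlog 1 = Real.log := funext fun y => if_pos rfl
    simpa [htlog, Real.rpow_neg_one] using Real.hasDerivAt_log hx.ne'
  · have htlog : tlog t = fun y => (y ^ (1 - t) - 1) / (1 - t) := funext fun y => if_neg ht
    have h1t : (1 : ℝ) - t ≠ 0 := sub_ne_zero.mpr ht.symm
    rw [htlog]
    have hpow := ((Real.hasDerivAt_rpow_const (p := 1 - t) (Or.inl hx.ne')).sub_const 1).div_const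
      (1 - t)
    rwa [sub_sub_cancel_left, mul_div_cancel_left₀ _ h1t] at hpow

noncomputable def binaryTemperedLoss (t η q : ℝ) : ℝ :=
  -η * tlog t q - (1 - η) * tlog t (1 - q)

noncomputable def temperedMinimizer (t η : ℝ) : ℝ :=
  η ^ (1 / t) / (η ^ (1 / t) + (1 - η) ^ (1 / t))

section

variable {t η q : ℝ}

lemma hasDerivAt_binaryTemperedLoss (hq0 : 0 < q) (hq1 : q < 1) :
    HasDerivAt (binaryTemperedLoss t η) (-η * q ^ (-t) + (1 - η) * (1 - q) ^ (-t)) q := by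
  have hreflect : HasDerivAt (fun r => tlog t (1 - r)) ((1 - q) ^ (-t) * -1) q :=
    (hasDerivAt_tlog t (sub_pos.mpr hq1)).comp q ((hasDerivAt_id q).const_sub 1)
  exact (((hasDerivAt_tlog t hq0).const_mul (-η)).sub (hreflect.const_mul (1 - η))).congr_deriv
    (by ring)

lemma strictConvexOn_binaryTemperedLoss (ht : 0 < t) (hη0 : 0 < η) (hη1 : η < 1) :
    StrictConvexOn ℝ (Ioo 0 1) (binaryTemperedLoss t η) := by
  have hderiv : EqOn (deriv (binaryTemperedLoss t η))
      (fun q => -η * q ^ (-t) + (1 - η) * (1 - q) ^ (-t)) (Ioo 0 1) :=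
    fun q hq => (hasDerivAt_binaryTemperedLoss hq.1 hq.2).deriv
  refine StrictMonoOn.strictConvexOn_of_deriv (convex_Ioo 0 1)
    (fun q hq => (hasDerivAt_binaryTemperedLoss hq.1 hq.2).continuousAt.continuousWithinAt) ?_
  rw [interior_Ioo]
  intro x hx y hy hxy
  rw [hderiv hx, hderiv hy]
  have hpos : y ^ (-t) < x ^ (-t) := Real.rpow_lt_rpow_of_neg hx.1 hxy (neg_neg_of_pos ht)
  have hneg : (1 - x) ^ (-t) < (1 - y) ^ (-t) :=
    Real.rpow_lt_rpow_of_neg (sub_pos.mpr hy.2) (by linarith) (neg_neg_of_pos ht)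
  nlinarith [mul_lt_mul_of_pos_left hpos hη0, mul_lt_mul_of_pos_left hneg (sub_pos.mpr hη1)]

lemma mul_rpow_neg_rpow_one_div_div {a s : ℝ} (ha : 0 < a) (hs : 0 < s) (ht : t ≠ 0) :
    a * (a ^ (1 / t) / s) ^ (-t) = s ^ t := by
  rw [Real.rpow_neg (by positivity), Real.div_rpow (by positivity) hs.le, ← Real.rpow_mul ha.le,
    one_div_mul_cancel ht, Real.rpow_one]
  field_simp

lemma temperedMinimizer_mem_Ioo (hη0 : 0 < η) (hη1 : η < 1) :
    temperedMinimizer t η ∈ Ioo 0 1 := by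
  have hb : 0 < (1 - η) ^ (1 / t) := Real.rpow_pos_of_pos (sub_pos.mpr hη1) _
  have ha : 0 < η ^ (1 / t) := Real.rpow_pos_of_pos hη0 _
  exact ⟨div_pos ha (by positivity), (div_lt_one (by positivity)).mpr (by linarith)⟩

lemma hasDerivAt_binaryTemperedLoss_temperedMinimizer (ht : 0 < t) (hη0 : 0 < η) (hη1 : η < 1) :
    HasDerivAt (binaryTemperedLoss t η) 0 (temperedMinimizer t η) := by
  obtain ⟨hp0, hp1⟩ := temperedMinimizer_mem_Ioo (t := t) hη0 hη1
  have h1η : 0 < 1 - η := sub_pos.mpr hη1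
  have hs : 0 < η ^ (1 / t) + (1 - η) ^ (1 / t) := by positivity
  have hcompl : 1 - temperedMinimizer t η =
      (1 - η) ^ (1 / t) / (η ^ (1 / t) + (1 - η) ^ (1 / t)) := by
    rw [temperedMinimizer]; field_simp; ring
  convert hasDerivAt_binaryTemperedLoss (t := t) (η := η) hp0 hp1 using 1
  rw [hcompl, temperedMinimizer, neg_mul, mul_rpow_neg_rpow_one_div_div hη0 hs ht.ne',
    mul_rpow_neg_rpow_one_div_div h1η hs ht.ne', neg_add_cancel]

lemma isMinOn_binaryTemperedLoss_temperedMinimizer (ht : 0 < t) (hη0 : 0 < η) (hη1 : η < 1) :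
    IsMinOn (binaryTemperedLoss t η) (Ioo 0 1) (temperedMinimizer t η) := by
  refine (strictConvexOn_binaryTemperedLoss ht hη0 hη1).convexOn.isMinOn_of_rightDeriv_eq_zero
    (by rw [interior_Ioo]; exact temperedMinimizer_mem_Ioo hη0 hη1) ?_
  exact (hasDerivAt_binaryTemperedLoss_temperedMinimizer ht hη0 hη1).hasDerivWithinAt.derivWithin
    (uniqueDiffWithinAt_Ioi _)

end

theorem binary_cross_entropy_minimizer_general (t₁ : ℝ) (ht0 : 0 < t₁)
    (η : ℝ) (hη0 : 0 < η) (hη1 : η < 1) :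
    (∀ q ∈ Set.Ioo (0 : ℝ) 1,
      -η * tlog t₁ (η ^ (1 / t₁) / (η ^ (1 / t₁) + (1 - η) ^ (1 / t₁))) -
        (1 - η) * tlog t₁
          (1 - η ^ (1 / t₁) / (η ^ (1 / t₁) + (1 - η) ^ (1 / t₁))) ≤
      -η * tlog t₁ q - (1 - η) * tlog t₁ (1 - q)) ∧
    (∀ q ∈ Set.Ioo (0 : ℝ) 1,
      -η * tlog t₁ q - (1 - η) * tlog t₁ (1 - q) =
        -η * tlog t₁ (η ^ (1 / t₁) / (η ^ (1 / t₁) + (1 - η) ^ (1 / t₁))) -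
          (1 - η) * tlog t₁
            (1 - η ^ (1 / t₁) / (η ^ (1 / t₁) + (1 - η) ^ (1 / t₁))) →
      q = η ^ (1 / t₁) / (η ^ (1 / t₁) + (1 - η) ^ (1 / t₁))) := by
  have hmin := isMinOn_binaryTemperedLoss_temperedMinimizer ht0 hη0 hη1
  refine ⟨fun q hq => hmin hq, fun q hq hq_eq => ?_⟩
  have hmin_q : IsMinOn (binaryTemperedLoss t₁ η) (Ioo 0 1) q :=
    fun r hr => (hq_eq.trans_le (hmin hr) :)
  exact (strictConvexOn_binaryTemperedLoss ht0 hη0 hη1).eq_of_isMinOn hmin_q hmin hq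
    (temperedMinimizer_mem_Ioo hη0 hη1)

/-- Unique minimizer of the binary tempered cross-entropy: for `0 < t₁ < 2`
and `η ∈ (0,1)`, the function `F q = -η log_{t₁} q - (1-η) log_{t₁} (1-q)` on
`(0,1)` attains its minimum exactly at
`q* = η^(1/t₁) / (η^(1/t₁) + (1-η)^(1/t₁))`. -/
theorem binary_cross_entropy_minimizer (t₁ : ℝ) (ht0 : 0 < t₁) (ht2 : t₁ < 2)
    (η : ℝ) (hη0 : 0 < η) (hη1 : η < 1) :
    (∀ q ∈ Set.Ioo (0 : ℝ) 1,
      -η * tlog t₁ (η ^ (1 / t₁) / (η ^ (1 / t₁) + (1 - η) ^ (1 / t₁))) -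
        (1 - η) * tlog t₁
          (1 - η ^ (1 / t₁) / (η ^ (1 / t₁) + (1 - η) ^ (1 / t₁))) ≤
      -η * tlog t₁ q - (1 - η) * tlog t₁ (1 - q)) ∧
    (∀ q ∈ Set.Ioo (0 : ℝ) 1,
      -η * tlog t₁ q - (1 - η) * tlog t₁ (1 - q) =
        -η * tlog t₁ (η ^ (1 / t₁) / (η ^ (1 / t₁) + (1 - η) ^ (1 / t₁))) -
          (1 - η) * tlog t₁
            (1 - η ^ (1 / t₁) / (η ^ (1 / t₁) + (1 - η) ^ (1 / t₁))) →
      q = η ^ (1 / t₁) / (η ^ (1 / t₁) + (1 - η) ^ (1 / t₁))) :=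
  binary_cross_entropy_minimizer_general t₁ ht0 η hη0 hη1
end

section
/- Flat region of the binary loss for t < 1 (from the proof of Theorem 1, part 2): let 0 < t < 1 and let a ∈ ℝ with a ≤ -1/(1-t). Then g = -a/2 satisfies the binary normalization equation exp_t(a/2 - g) + exp_t(-a/2 - g) = 1, and moreover exp_t(a/2 - g) = 0; hence for any 0 < t₁ < 1 the surrogate loss on this region equals the constant -log_{t₁}(0⁺) = 1/(1-t₁), computed as the limit of -log_{t₁}(p) as p → 0⁺. -/
/-- Flat region of the binary loss for `t < 1`: for `0 < t < 1` and margin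
`a ≤ -1/(1-t)`, the value `g = -a/2` satisfies the binary normalization
equation and gives predictive probability `exp_t(a/2 - g) = 0`; moreover for
any `0 < t₁ < 1` the loss `-log_{t₁} p` tends to the constant `1/(1-t₁)` as
`p → 0⁺`. -/
theorem binary_flat_region (t : ℝ) (ht0 : 0 < t) (ht1 : t < 1)
    (a : ℝ) (ha : a ≤ -1 / (1 - t)) :
    (texp t (a / 2 - (-a / 2)) + texp t (-a / 2 - (-a / 2)) = 1) ∧
    (texp t (a / 2 - (-a / 2)) = 0) ∧
    (∀ t₁ : ℝ, 0 < t₁ → t₁ < 1 →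
      Filter.Tendsto (fun p : ℝ => -tlog t₁ p) (nhdsWithin 0 (Set.Ioi 0))
        (nhds (1 / (1 - t₁)))) := by
  have htne : t ≠ 1 := ne_of_lt ht1
  have h1t : (0:ℝ) < 1 - t := by linarith
  have key : texp t (a / 2 - (-a / 2)) = 0 := by
    have harg : a / 2 - (-a / 2) = a := by ring
    rw [harg, texp, if_neg htne]
    have hle : 1 + (1 - t) * a ≤ 0 := by
      have : (1 - t) * a ≤ (1 - t) * (-1 / (1 - t)) :=
        mul_le_mul_of_nonneg_left ha (le_of_lt h1t)
      have h2 : (1 - t) * (-1 / (1 - t)) = -1 := by field_simp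
      linarith [h2 ▸ this]
    rw [max_eq_left hle]
    exact Real.zero_rpow (by positivity)
  refine ⟨?_, key, ?_⟩
  · rw [key]
    have : -a / 2 - (-a / 2) = 0 := by ring
    rw [this, texp, if_neg htne]
    simp
  · intro t₁ ht₁0 ht₁1
    have htne₁ : t₁ ≠ 1 := ne_of_lt ht₁1
    have h1t₁ : (0:ℝ) < 1 - t₁ := by linarith
    have heq : (fun p : ℝ => -tlog t₁ p) = fun p : ℝ => -((p ^ (1 - t₁) - 1) / (1 - t₁)) := by
      funext p; rw [tlog, if_neg htne₁]
    rw [heq]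
    have hlim : Filter.Tendsto (fun p : ℝ => p ^ (1 - t₁)) (nhdsWithin 0 (Set.Ioi 0)) (nhds 0) := by
      have := (Real.continuousAt_rpow_const 0 (1 - t₁) (Or.inr h1t₁.le)).tendsto
      rw [Real.zero_rpow (ne_of_gt h1t₁)] at this
      exact this.mono_left nhdsWithin_le_nhds
    have : Filter.Tendsto (fun p : ℝ => -((p ^ (1 - t₁) - 1) / (1 - t₁)))
        (nhdsWithin 0 (Set.Ioi 0)) (nhds (-((0 - 1) / (1 - t₁)))) :=
      (((hlim.sub_const 1).div_const (1 - t₁)).neg)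
    simpa [neg_div] using this
end
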